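/- arXiv:2603.04359 — 2 statements merged into one kernel-verified Lean document; each statement's English description precedes it below -/
import Mathlib

section
/- Let W be a matrix, x a random vector, and Δx, ΔW perturbations. If E[Δx xᵀ] = 0, ΔWᵀW = 0, and E[‖ΔW Δx‖²] = 0, then E[‖Wx − (W−ΔW)(x−Δx)‖²] = E[‖W Δx‖²] + E[‖ΔW x‖²], and consequently the signal-to-noise ratio E[‖Wx‖²] / E[‖Wx − (W−ΔW)(x−Δx)‖²] equals the harmonic sum of E[‖Wx‖²]/E[‖W Δx‖²] and E[‖Wx‖²]/E[‖ΔW x‖²]. -/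
open MeasureTheory Matrix

/-- The parallel (harmonic sum) operator: `a ∥ b = (1/a + 1/b)⁻¹`. -/
noncomputable def par (a b : ℝ) : ℝ := (1 / a + 1 / b)⁻¹

/-- Under the error de-correlation assumptions (`E[Δx xᵀ] = 0`, `ΔWᵀW = 0`, and
`E[‖ΔW Δx‖²] = 0`), the joint quantization error decomposes as
`E[‖Wx − (W−ΔW)(x−Δx)‖²] = E[‖W Δx‖²] + E[‖ΔW x‖²]`, and hence the SQNR
`E[‖Wx‖²]/E[‖Wx − (W−ΔW)(x−Δx)‖²]` is the harmonic sum of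
`E[‖Wx‖²]/E[‖W Δx‖²]` and `E[‖Wx‖²]/E[‖ΔW x‖²]`. -/
theorem sqnr_harmonic_decomposition {Ω : Type*} [MeasurableSpace Ω] (μ : Measure Ω)
    [IsProbabilityMeasure μ] {m d : ℕ}
    (W ΔW : Matrix (Fin m) (Fin d) ℝ) (x Δx : Ω → Fin d → ℝ)
    (hxL2 : ∀ i, MemLp (fun ω => x ω i) 2 μ)
    (hΔxL2 : ∀ i, MemLp (fun ω => Δx ω i) 2 μ)
    (hdecor : ∀ i j, ∫ ω, Δx ω i * x ω j ∂μ = 0)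
    (hW : ΔWᵀ * W = 0)
    (hΔΔ : ∫ ω, ∑ j, (ΔW.mulVec (Δx ω) j) ^ 2 ∂μ = 0)
    (hN1 : 0 < ∫ ω, ∑ j, (W.mulVec (Δx ω) j) ^ 2 ∂μ)
    (hN2 : 0 < ∫ ω, ∑ j, (ΔW.mulVec (x ω) j) ^ 2 ∂μ) :
    (∫ ω, ∑ j, (W.mulVec (x ω) j - (W - ΔW).mulVec (x ω - Δx ω) j) ^ 2 ∂μ =
      (∫ ω, ∑ j, (W.mulVec (Δx ω) j) ^ 2 ∂μ) +
        ∫ ω, ∑ j, (ΔW.mulVec (x ω) j) ^ 2 ∂μ) ∧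
    (∫ ω, ∑ j, (W.mulVec (x ω) j) ^ 2 ∂μ) /
        (∫ ω, ∑ j, (W.mulVec (x ω) j - (W - ΔW).mulVec (x ω - Δx ω) j) ^ 2 ∂μ) =
      par ((∫ ω, ∑ j, (W.mulVec (x ω) j) ^ 2 ∂μ) /
            ∫ ω, ∑ j, (W.mulVec (Δx ω) j) ^ 2 ∂μ)
          ((∫ ω, ∑ j, (W.mulVec (x ω) j) ^ 2 ∂μ) /
            ∫ ω, ∑ j, (ΔW.mulVec (x ω) j) ^ 2 ∂μ) := by
  -- L2 membership of components of matrix-vector products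
  have hmul : ∀ (M : Matrix (Fin m) (Fin d) ℝ) (f : Ω → Fin d → ℝ),
      (∀ i, MemLp (fun ω => f ω i) 2 μ) → ∀ j, MemLp (fun ω => M.mulVec (f ω) j) 2 μ := by
    intro M f hf j
    have : (fun ω => M.mulVec (f ω) j) = fun ω => ∑ k, M j k * f ω k := by
      funext ω; simp [Matrix.mulVec, dotProduct]
    rw [this]
    have h := memLp_finset_sum' (μ := μ) Finset.univ (fun k _ => (hf k).const_mul (M j k))
    simpa [Finset.sum_fn] using h
  have hint : ∀ (M : Matrix (Fin m) (Fin d) ℝ) (f : Ω → Fin d → ℝ),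
      (∀ i, MemLp (fun ω => f ω i) 2 μ) →
      Integrable (fun ω => ∑ j, (M.mulVec (f ω) j) ^ 2) μ := by
    intro M f hf
    exact integrable_finset_sum _ (fun j _ => (hmul M f hf j).integrable_sq)
  have hI1 := hint W Δx hΔxL2
  have hI2 := hint ΔW x hxL2
  have hIc := hint ΔW Δx hΔxL2
  -- ΔW Δx = 0 a.e.
  have hcz : ∀ᵐ ω ∂μ, ∀ j, ΔW.mulVec (Δx ω) j = 0 := by
    have h0 : (fun ω => ∑ j, (ΔW.mulVec (Δx ω) j) ^ 2) =ᵐ[μ] 0 := by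
      rw [← integral_eq_zero_iff_of_nonneg (fun ω => Finset.sum_nonneg fun j _ => sq_nonneg _) hIc]
      exact hΔΔ
    filter_upwards [h0] with ω hω j
    have := (Finset.sum_eq_zero_iff_of_nonneg (fun j _ => sq_nonneg (ΔW.mulVec (Δx ω) j))).mp hω
      j (Finset.mem_univ j)
    exact pow_eq_zero_iff (two_ne_zero) |>.mp this
  -- cross term vanishes pointwise
  have hcross : ∀ (u v : Fin d → ℝ), ∑ j, W.mulVec u j * ΔW.mulVec v j = 0 := by
    intro u v
    have : (W.mulVec u) ⬝ᵥ (ΔW.mulVec v) = 0 := by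
      rw [dotProduct_mulVec, ← Matrix.mulVec_transpose, Matrix.mulVec_mulVec, hW,
        Matrix.zero_mulVec, zero_dotProduct]
    simpa [dotProduct] using this
  -- main decomposition
  have key : (fun ω => ∑ j, (W.mulVec (x ω) j - (W - ΔW).mulVec (x ω - Δx ω) j) ^ 2) =ᵐ[μ]
      fun ω => (∑ j, (W.mulVec (Δx ω) j) ^ 2) + ∑ j, (ΔW.mulVec (x ω) j) ^ 2 := by
    filter_upwards [hcz] with ω hω
    have expand : ∀ j, W.mulVec (x ω) j - (W - ΔW).mulVec (x ω - Δx ω) j =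
        W.mulVec (Δx ω) j + ΔW.mulVec (x ω) j := by
      intro j
      have h1 : (W - ΔW).mulVec (x ω - Δx ω) j =
          W.mulVec (x ω) j - W.mulVec (Δx ω) j - ΔW.mulVec (x ω) j + ΔW.mulVec (Δx ω) j := by
        simp [Matrix.sub_mulVec, Matrix.mulVec_sub]
        ring
      rw [h1, hω j]
      ring
    calc ∑ j, (W.mulVec (x ω) j - (W - ΔW).mulVec (x ω - Δx ω) j) ^ 2
        = ∑ j, ((W.mulVec (Δx ω) j) ^ 2 + (ΔW.mulVec (x ω) j) ^ 2
            + 2 * (W.mulVec (Δx ω) j * ΔW.mulVec (x ω) j)) := by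
          refine Finset.sum_congr rfl fun j _ => ?_
          rw [expand j]; ring
      _ = (∑ j, (W.mulVec (Δx ω) j) ^ 2) + ∑ j, (ΔW.mulVec (x ω) j) ^ 2 := by
          rw [Finset.sum_add_distrib, Finset.sum_add_distrib, ← Finset.mul_sum,
            hcross (Δx ω) (x ω)]
          ring
  have hmain : ∫ ω, ∑ j, (W.mulVec (x ω) j - (W - ΔW).mulVec (x ω - Δx ω) j) ^ 2 ∂μ =
      (∫ ω, ∑ j, (W.mulVec (Δx ω) j) ^ 2 ∂μ) + ∫ ω, ∑ j, (ΔW.mulVec (x ω) j) ^ 2 ∂μ := by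
    rw [integral_congr_ae key, integral_add hI1 hI2]
  refine ⟨hmain, ?_⟩
  rw [hmain]
  set S := ∫ ω, ∑ j, (W.mulVec (x ω) j) ^ 2 ∂μ with hS
  set N1 := ∫ ω, ∑ j, (W.mulVec (Δx ω) j) ^ 2 ∂μ
  set N2 := ∫ ω, ∑ j, (ΔW.mulVec (x ω) j) ^ 2 ∂μ
  unfold par
  rcases eq_or_ne S 0 with h | h
  · simp [h]
  · field_simp
end

section
/- For positive definite symmetric matrices P and Q, the function f(M) = trace(M⁻ᵀ P M⁻¹) · trace(M Q Mᵀ) over invertible M attains its minimum value (trace((Q^{1/2} P Q^{1/2})^{1/2}))², with equality achieved when M Q Mᵀ = M⁻ᵀ P M⁻¹. -/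
open Matrix

namespace Matrix.PosSemidef

open scoped ComplexOrder

/-- The positive semidefinite square root, as `Matrix.PosSemidef.sqrt` was defined in the
older Mathlib (removed since). -/
noncomputable def sqrt {n : Type*} [Fintype n] [DecidableEq n] {𝕜 : Type*} [RCLike 𝕜]
    {A : Matrix n n 𝕜} (hA : A.PosSemidef) : Matrix n n 𝕜 :=
  (hA.1.eigenvectorUnitary : Matrix n n 𝕜) *
    diagonal (((↑) : ℝ → 𝕜) ∘ (√·) ∘ hA.1.eigenvalues) *
    (star hA.1.eigenvectorUnitary : Matrix n n 𝕜)

end Matrix.PosSemidef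

namespace Matrix.PosSemidef

open scoped ComplexOrder MatrixOrder

lemma sqrt_eq_cfcSqrt {n : Type*} [Fintype n] [DecidableEq n] {𝕜 : Type*} [RCLike 𝕜]
    {A : Matrix n n 𝕜} (hA : A.PosSemidef) : hA.sqrt = CFC.sqrt A := by
  rw [CFC.sqrt_eq_cfc, cfc_nnreal_eq_real _ A, hA.1.cfc_eq]
  simp only [IsHermitian.cfc, Unitary.conjStarAlgAut_apply, sqrt]
  congr 3
  funext i
  simp [Real.coe_sqrt, Real.coe_toNNReal', max_eq_left (hA.eigenvalues_nonneg i)]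

lemma sqrt_mul_self {n : Type*} [Fintype n] [DecidableEq n] {𝕜 : Type*} [RCLike 𝕜]
    {A : Matrix n n 𝕜} (hA : A.PosSemidef) : hA.sqrt * hA.sqrt = A := by
  rw [hA.sqrt_eq_cfcSqrt]
  exact CFC.sqrt_mul_sqrt_self A hA.nonneg

lemma posSemidef_sqrt {n : Type*} [Fintype n] [DecidableEq n] {𝕜 : Type*} [RCLike 𝕜]
    {A : Matrix n n 𝕜} (hA : A.PosSemidef) : hA.sqrt.PosSemidef := by
  rw [hA.sqrt_eq_cfcSqrt]
  exact (CFC.sqrt_nonneg A).posSemidef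

lemma eq_of_sq_eq_sq {n : Type*} [Fintype n] [DecidableEq n] {𝕜 : Type*} [RCLike 𝕜]
    {A B : Matrix n n 𝕜} (hA : A.PosSemidef) (hB : B.PosSemidef) (hAB : A ^ 2 = B ^ 2) :
    A = B := by
  rw [← CFC.sqrt_sq A hA.nonneg, hAB, CFC.sqrt_sq B hB.nonneg]

end Matrix.PosSemidef

private lemma trace_cs {d : ℕ} (A B : Matrix (Fin d) (Fin d) ℝ) :
    (Aᵀ * B).trace ^ 2 ≤ (Aᵀ * A).trace * (Bᵀ * B).trace := by
  have h := Finset.sum_mul_sq_le_sq_mul_sq Finset.univ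
    (fun p : Fin d × Fin d => A p.1 p.2) (fun p : Fin d × Fin d => B p.1 p.2)
  have e : ∀ C D : Matrix (Fin d) (Fin d) ℝ,
      (Cᵀ * D).trace = ∑ p : Fin d × Fin d, C p.1 p.2 * D p.1 p.2 := by
    intro C D
    rw [Matrix.trace, Fintype.sum_prod_type]
    simp only [Matrix.diag_apply, Matrix.mul_apply, Matrix.transpose_apply]
    exact Finset.sum_comm
  rw [e, e, e]
  simpa [sq] using h

/-- For symmetric positive definite `P, Q`, the function
`f(M) = trace(M⁻ᵀ P M⁻¹) · trace(M Q Mᵀ)` over invertible `M` attains the minimum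
value `(trace((Q^{1/2} P Q^{1/2})^{1/2}))²`, with equality achieved whenever
`M Q Mᵀ = M⁻ᵀ P M⁻¹`. -/
theorem trace_product_min {d : ℕ} (P Q : Matrix (Fin d) (Fin d) ℝ)
    (hP : P.PosDef) (hQ : Q.PosDef)
    (S : Matrix (Fin d) (Fin d) ℝ) (hS : S.PosSemidef)
    (hSsq : S * S = hQ.posSemidef.sqrt * P * hQ.posSemidef.sqrt) :
    IsLeast {r : ℝ | ∃ M : Matrix (Fin d) (Fin d) ℝ, IsUnit M.det ∧
        r = (Mᵀ⁻¹ * P * M⁻¹).trace * (M * Q * Mᵀ).trace} (S.trace ^ 2) ∧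
    ∀ M : Matrix (Fin d) (Fin d) ℝ, IsUnit M.det →
      M * Q * Mᵀ = Mᵀ⁻¹ * P * M⁻¹ →
      (Mᵀ⁻¹ * P * M⁻¹).trace * (M * Q * Mᵀ).trace = S.trace ^ 2 := by
  set R := hQ.posSemidef.sqrt with hRdef
  have hRR : R * R = Q := hQ.posSemidef.sqrt_mul_self
  have hRsym : Rᵀ = R := by
    have := hQ.posSemidef.posSemidef_sqrt.1
    rwa [Matrix.IsHermitian, Matrix.conjTranspose_eq_transpose_of_trivial] at this
  have hSsym : Sᵀ = S := by
    have := hS.1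
    rwa [Matrix.IsHermitian, Matrix.conjTranspose_eq_transpose_of_trivial] at this
  have hRunit : IsUnit R.det := by
    have h0 : R.det * R.det = Q.det := by rw [← Matrix.det_mul, hRR]
    refine isUnit_iff_ne_zero.mpr fun h => hQ.det_pos.ne' ?_
    rw [← h0, h, mul_zero]
  have hSunit : IsUnit S.det := by
    have h1 : S.det * S.det = R.det * P.det * R.det := by
      rw [← Matrix.det_mul, hSsq, Matrix.det_mul, Matrix.det_mul]
    refine isUnit_iff_ne_zero.mpr fun h => ?_
    rw [h, mul_zero] at h1
    have h2 : R.det ≠ 0 := isUnit_iff_ne_zero.mp hRunit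
    exact (mul_ne_zero (mul_ne_zero h2 hP.det_pos.ne') h2) h1.symm
  -- key identity: for invertible M, (M*R)ᵀ⁻¹ * (S*S) * (M*R)⁻¹ = Mᵀ⁻¹ * P * M⁻¹
  have key : ∀ M : Matrix (Fin d) (Fin d) ℝ, IsUnit M.det →
      ((M * R)ᵀ)⁻¹ * (S * S) * (M * R)⁻¹ = Mᵀ⁻¹ * P * M⁻¹ := by
    intro M hM
    rw [hSsq, Matrix.transpose_mul, hRsym, Matrix.mul_inv_rev, Matrix.mul_inv_rev]
    simp only [Matrix.mul_assoc]
    rw [Matrix.nonsing_inv_mul_cancel_left _ _ hRunit,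
      Matrix.mul_nonsing_inv_cancel_left _ _ hRunit]
  -- the second computation: M * Q * Mᵀ = (M*R) * (M*R)ᵀ
  have keyQ : ∀ M : Matrix (Fin d) (Fin d) ℝ, M * Q * Mᵀ = (M * R) * (M * R)ᵀ := by
    intro M
    rw [Matrix.transpose_mul, hRsym, ← hRR]
    simp only [Matrix.mul_assoc]
  -- equality case: if M*Q*Mᵀ = Mᵀ⁻¹*P*M⁻¹ then ((M*R)ᵀ*(M*R)) = S
  have eqcase : ∀ M : Matrix (Fin d) (Fin d) ℝ, IsUnit M.det →
      M * Q * Mᵀ = Mᵀ⁻¹ * P * M⁻¹ → (M * R)ᵀ * (M * R) = S := by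
    intro M hM heq
    set X := M * R with hX
    have hXunit : IsUnit X.det := by
      rw [hX, Matrix.det_mul]; exact hM.mul hRunit
    have hXTunit : IsUnit Xᵀ.det := by rwa [Matrix.det_transpose]
    have hsq : (Xᵀ * X) ^ 2 = S ^ 2 := by
      have : Xᵀ * (X * Xᵀ) * X = Xᵀ * (Xᵀ⁻¹ * (S * S) * X⁻¹) * X := by
        rw [← keyQ M, heq, key M hM]
      calc (Xᵀ * X) ^ 2 = Xᵀ * (X * Xᵀ) * X := by
            rw [sq]; simp only [Matrix.mul_assoc]
        _ = Xᵀ * (Xᵀ⁻¹ * (S * S) * X⁻¹) * X := this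
        _ = S ^ 2 := by
            simp only [Matrix.mul_assoc]
            rw [Matrix.mul_nonsing_inv_cancel_left _ _ hXTunit,
              Matrix.nonsing_inv_mul _ hXunit, Matrix.mul_one, sq]
    have hXX : (Xᵀ * X).PosSemidef := by
      have := Matrix.posSemidef_conjTranspose_mul_self X
      rwa [Matrix.conjTranspose_eq_transpose_of_trivial] at this
    exact hXX.eq_of_sq_eq_sq hS hsq
  -- value at equality
  have valeq : ∀ M : Matrix (Fin d) (Fin d) ℝ, IsUnit M.det →
      M * Q * Mᵀ = Mᵀ⁻¹ * P * M⁻¹ →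
      (Mᵀ⁻¹ * P * M⁻¹).trace * (M * Q * Mᵀ).trace = S.trace ^ 2 := by
    intro M hM heq
    have h1 : (M * Q * Mᵀ).trace = S.trace := by
      rw [keyQ M, Matrix.trace_mul_comm, eqcase M hM heq]
    rw [← heq, h1, sq]
  refine ⟨⟨?_, ?_⟩, valeq⟩
  · -- membership: M₀ = hS.sqrt * R⁻¹
    set T := hS.sqrt with hT
    have hTT : T * T = S := hS.sqrt_mul_self
    have hTsym : Tᵀ = T := by
      have := hS.posSemidef_sqrt.1
      rwa [Matrix.IsHermitian, Matrix.conjTranspose_eq_transpose_of_trivial] at this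
    have hTunit : IsUnit T.det := by
      have h0 : T.det * T.det = S.det := by rw [← Matrix.det_mul, hTT]
      refine isUnit_iff_ne_zero.mpr fun h => (isUnit_iff_ne_zero.mp hSunit) ?_
      rw [← h0, h, mul_zero]
    refine ⟨T * R⁻¹, ?_, ?_⟩
    · rw [Matrix.det_mul]
      exact hTunit.mul (by rwa [Matrix.det_nonsing_inv, isUnit_ringInverse])
    · have hM0 : IsUnit (T * R⁻¹).det := by
        rw [Matrix.det_mul]
        exact hTunit.mul (by rwa [Matrix.det_nonsing_inv, isUnit_ringInverse])
      have hMQ : (T * R⁻¹) * Q * (T * R⁻¹)ᵀ = S := by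
        rw [Matrix.transpose_mul, Matrix.transpose_nonsing_inv, hRsym, hTsym, ← hRR]
        simp only [Matrix.mul_assoc]
        rw [Matrix.nonsing_inv_mul_cancel_left _ _ hRunit,
          Matrix.mul_nonsing_inv_cancel_left _ _ hRunit, hTT]
      have hMP : ((T * R⁻¹)ᵀ)⁻¹ * P * (T * R⁻¹)⁻¹ = S := by
        have hX : T * R⁻¹ * R = T := Matrix.nonsing_inv_mul_cancel_right _ _ hRunit
        rw [← key (T * R⁻¹) hM0, hX, hTsym, ← hTT]
        simp only [Matrix.mul_assoc]
        rw [Matrix.nonsing_inv_mul_cancel_left _ _ hTunit,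
          Matrix.mul_nonsing_inv _ hTunit, Matrix.mul_one]
      rw [hMP, hMQ, sq]
  · -- lower bound
    rintro r ⟨M, hM, rfl⟩
    set X := M * R with hX
    have hXunit : IsUnit X.det := by
      rw [hX, Matrix.det_mul]; exact hM.mul hRunit
    have hXTunit : IsUnit Xᵀ.det := by rwa [Matrix.det_transpose]
    -- A := (Xᵀ)⁻¹ * S, so Aᵀ = S * X⁻¹
    set A := (Xᵀ)⁻¹ * S with hA
    have hAT : Aᵀ = S * X⁻¹ := by
      rw [hA, Matrix.transpose_mul, hSsym, Matrix.transpose_nonsing_inv,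
        Matrix.transpose_transpose]
    have h1 : (Aᵀ * X).trace = S.trace := by
      rw [hAT, Matrix.mul_assoc, Matrix.nonsing_inv_mul _ hXunit, Matrix.mul_one]
    have h2 : (Aᵀ * A).trace = (Mᵀ⁻¹ * P * M⁻¹).trace := by
      rw [hAT, hA, ← key M hM]
      rw [Matrix.trace_mul_comm]
      congr 1
      simp only [Matrix.mul_assoc]
      rfl
    have h3 : (Xᵀ * X).trace = (M * Q * Mᵀ).trace := by
      rw [keyQ M, Matrix.trace_mul_comm]
    calc S.trace ^ 2 = (Aᵀ * X).trace ^ 2 := by rw [h1]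
      _ ≤ (Aᵀ * A).trace * (Xᵀ * X).trace := trace_cs A X
      _ = (Mᵀ⁻¹ * P * M⁻¹).trace * (M * Q * Mᵀ).trace := by rw [h2, h3]
end
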